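/- Let Λ = Λ(t,x,u,p,q) be a smooth function of five real variables (p and q standing for the jet variables u_x and u_xx). Suppose that for all (t,x,u,p,q,r) ∈ ℝ⁶ one has ∂Λ/∂p = ∂²Λ/∂x∂q + p·∂²Λ/∂u∂q + q·∂²Λ/∂p∂q + r·∂²Λ/∂q² (i.e., Λ_p = D_x(Λ_q), where D_x = ∂_x + p·∂_u + q·∂_p + r·∂_q is the truncated total x-derivative). Then ∂²Λ/∂q² = 0 identically, so there are smooth functions a(t,x,u,p) and b(t,x,u,p) with Λ(t,x,u,p,q) = a(t,x,u,p)·q + b(t,x,u,p), and these satisfy ∂b/∂p = ∂a/∂x + p·∂a/∂u. -/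

import Mathlib

/-!
The hypothesis is affine in `r`, which `Λ` does not depend on, so its `r`-coefficient `Λ_qq`
vanishes. Hence `Λ` is affine in `q`, with `a = Λ_q(t,x,u,p,0)` and `b = Λ(t,x,u,p,0)`, and the
hypothesis at `q = r = 0` reads `b_p = a_x + p·a_u`.
-/

noncomputable section

def Smooth5 (Λ : ℝ → ℝ → ℝ → ℝ → ℝ → ℝ) : Prop :=
  ContDiff ℝ (⊤ : ℕ∞)
    (fun v : ℝ × ℝ × ℝ × ℝ × ℝ => Λ v.1 v.2.1 v.2.2.1 v.2.2.2.1 v.2.2.2.2)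

def Smooth4 (a : ℝ → ℝ → ℝ → ℝ → ℝ) : Prop :=
  ContDiff ℝ (⊤ : ℕ∞)
    (fun v : ℝ × ℝ × ℝ × ℝ => a v.1 v.2.1 v.2.2.1 v.2.2.2)

open scoped ContDiff

theorem eq_smul_deriv_zero_add_of_deriv_deriv_eq_zero {𝕜 E : Type*} [RCLike 𝕜]
    [NormedAddCommGroup E] [NormedSpace 𝕜 E] {f : 𝕜 → E} (hf : ContDiff 𝕜 2 f)
    (h : ∀ s, deriv (deriv f) s = 0) (z : 𝕜) : f z = z • deriv f 0 + f 0 := by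
  have hf' : Differentiable 𝕜 (deriv f) := (hf.deriv' (n := 1)).differentiable one_ne_zero
  have hslope : ∀ s, deriv f s = deriv f 0 := fun s => is_const_of_deriv_eq_zero hf' h s 0
  have hg : ∀ s, HasDerivAt (fun s => f s - s • deriv f 0) 0 s := fun s => by
    have := ((hf.differentiable two_ne_zero) s).hasDerivAt.sub
      ((hasDerivAt_id' s).smul_const (deriv f 0))
    rwa [hslope s, one_smul, sub_self] at this
  have hconst := is_const_of_deriv_eq_zero (fun s => (hg s).differentiableAt)
    (fun s => (hg s).deriv) z 0
  rw [zero_smul, sub_zero] at hconst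
  exact eq_add_of_sub_eq' hconst

namespace Smooth5

variable {Λ : ℝ → ℝ → ℝ → ℝ → ℝ → ℝ}

theorem contDiff_uncurry (hΛ : Smooth5 Λ) :
    ContDiff ℝ ∞ (Function.uncurry fun (v : ℝ × ℝ × ℝ × ℝ) (s : ℝ) =>
      Λ v.1 v.2.1 v.2.2.1 v.2.2.2 s) :=
  hΛ.comp (f := fun w : (ℝ × ℝ × ℝ × ℝ) × ℝ => (w.1.1, w.1.2.1, w.1.2.2.1, w.1.2.2.2, w.2))
    (by fun_prop)

theorem contDiff_last (hΛ : Smooth5 Λ) (t x u p : ℝ) : ContDiff ℝ ∞ (Λ t x u p) :=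
  hΛ.comp (f := fun s : ℝ => (t, x, u, p, s)) (by fun_prop)

theorem smooth4_eval_last (hΛ : Smooth5 Λ) (q : ℝ) : Smooth4 fun t x u p => Λ t x u p q :=
  hΛ.comp (f := fun v : ℝ × ℝ × ℝ × ℝ => (v.1, v.2.1, v.2.2.1, v.2.2.2, q)) (by fun_prop)

theorem smooth4_deriv_last (hΛ : Smooth5 Λ) (q : ℝ) :
    Smooth4 fun t x u p => deriv (Λ t x u p) q :=
  hΛ.contDiff_uncurry.fderiv_apply contDiff_const contDiff_const le_rfl

end Smooth5

/-- If `Λ(t,x,u,p,q)` is smooth and satisfies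
`Λ_p = Λ_xq + p·Λ_uq + q·Λ_pq + r·Λ_qq` for all `(t,x,u,p,q,r)`, then
`Λ_qq = 0` identically, so `Λ = a(t,x,u,p)·q + b(t,x,u,p)` with smooth `a`, `b`
satisfying `b_p = a_x + p·a_u`. -/
theorem multiplier_linear_in_uxx
    (Λ : ℝ → ℝ → ℝ → ℝ → ℝ → ℝ) (hΛ : Smooth5 Λ)
    (h : ∀ t x u p q r : ℝ,
      deriv (fun s => Λ t x u s q) p
        = deriv (fun y => deriv (fun s => Λ t y u p s) q) x
          + p * deriv (fun w => deriv (fun s => Λ t x w p s) q) u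
          + q * deriv (fun z => deriv (fun s => Λ t x u z s) q) p
          + r * deriv (fun s => deriv (fun s' => Λ t x u p s') s) q) :
    (∀ t x u p q : ℝ,
      deriv (fun s => deriv (fun s' => Λ t x u p s') s) q = 0) ∧
    ∃ a b : ℝ → ℝ → ℝ → ℝ → ℝ, Smooth4 a ∧ Smooth4 b ∧
      (∀ t x u p q : ℝ, Λ t x u p q = a t x u p * q + b t x u p) ∧
      (∀ t x u p : ℝ,
        deriv (fun s => b t x u s) p
          = deriv (fun y => a t y u p) x + p * deriv (fun w => a t x w p) u) := by
  have hqq : ∀ t x u p q : ℝ, deriv (deriv (Λ t x u p)) q = 0 := fun t x u p q => by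
    linarith [h t x u p q 0, h t x u p q 1]
  refine ⟨hqq, fun t x u p => deriv (Λ t x u p) 0, fun t x u p => Λ t x u p 0,
    hΛ.smooth4_deriv_last 0, hΛ.smooth4_eval_last 0, fun t x u p q => ?_, fun t x u p => ?_⟩
  · rw [mul_comm, ← smul_eq_mul]
    exact eq_smul_deriv_zero_add_of_deriv_deriv_eq_zero
      ((hΛ.contDiff_last t x u p).of_le (by norm_cast)) (hqq t x u p) q
  · simpa using h t x u p 0 0
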